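/- Let S be a set of points in general position in the plane, and let a, b ∈ S be two consecutive vertices of the boundary of the convex hull of S (so all other points of S lie strictly on one side of the line through a and b). If the open halfplane containing the other points of S contains exactly 2 or exactly 3 points of S, then there exist two plane Hamiltonian paths π1, π2 on S whose set of common edges is exactly the segment ab. -/

import Mathlib

open Set
open scoped Classical

noncomputable section

/-- Points in the plane. -/
abbrev Pt : Type := ℝ × ℝ

/-- Orientation determinant of the triple `(a, b, p)`:
positive iff `p` lies strictly to the left of the directed line from `a` to `b`. -/
def det3 (a b p : Pt) : ℝ :=
  (b.1 - a.1) * (p.2 - a.2) - (b.2 - a.2) * (p.1 - a.1)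

/-- A finite point set is in general position if no three of its points are collinear. -/
def GenPos (S : Finset Pt) : Prop :=
  ∀ p ∈ S, ∀ q ∈ S, ∀ r ∈ S,
    p ≠ q → p ≠ r → q ≠ r → ¬ Collinear ℝ ({p, q, r} : Set Pt)

/-- The list of (directed) edges of a polygonal path given by its list of vertices. -/
def edgeList (l : List Pt) : List (Pt × Pt) := l.zip l.tail

/-- The segment `ab` is an edge of the path `l`, i.e. `a` and `b` are consecutive on `l`. -/
def IsEdgeOf (a b : Pt) (l : List Pt) : Prop :=
  (a, b) ∈ edgeList l ∨ (b, a) ∈ edgeList l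

/-- `l` is a plane (crossing-free) Hamiltonian path on the point set `S`:
its vertices are exactly the points of `S`, each visited once, and any two distinct
edges intersect only in common endpoints. -/
def PlanePath (S : Finset Pt) (l : List Pt) : Prop :=
  l.Nodup ∧ l.toFinset = S ∧
  ∀ e ∈ edgeList l, ∀ f ∈ edgeList l, e ≠ f →
    segment ℝ e.1 e.2 ∩ segment ℝ f.1 f.2 ⊆
      (({e.1, e.2} : Set Pt) ∩ ({f.1, f.2} : Set Pt))

/-- Two paths are edge-disjoint: no segment is an edge of both. -/
def EdgeDisjoint (l₁ l₂ : List Pt) : Prop :=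
  ∀ x y : Pt, IsEdgeOf x y l₁ → ¬ IsEdgeOf x y l₂

/-- `p` is a vertex of the boundary of the convex hull of `S`. -/
def HullVertex (S : Finset Pt) (p : Pt) : Prop :=
  p ∈ Set.extremePoints ℝ (convexHull ℝ (S : Set Pt))

/-- `ab` is an edge of the boundary of the convex hull of `S`, i.e. `a` and `b` are
consecutive hull vertices: all other points of `S` lie strictly on one side of line `ab`. -/
def IsHullEdge (S : Finset Pt) (a b : Pt) : Prop :=
  a ∈ S ∧ b ∈ S ∧ a ≠ b ∧
  ((∀ p ∈ S, p ≠ a → p ≠ b → 0 < det3 a b p) ∨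
   (∀ p ∈ S, p ≠ a → p ≠ b → det3 a b p < 0))

/-- The segment `xy` is a bridge over the line through `a` and `b`:
it crosses the line `ℓ(ab)` but not the segment `ab`. -/
def IsBridge (a b x y : Pt) : Prop :=
  det3 a b x * det3 a b y < 0 ∧ segment ℝ x y ∩ segment ℝ a b = ∅

/-- The set of common edges of the two paths is exactly the segment `ab`. -/
def SharesExactly (a b : Pt) (l₁ l₂ : List Pt) : Prop :=
  IsEdgeOf a b l₁ ∧ IsEdgeOf a b l₂ ∧
  ∀ x y : Pt, IsEdgeOf x y l₁ → IsEdgeOf x y l₂ → ({x, y} : Set Pt) = ({a, b} : Set Pt)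

/-!
Put the other points on the left of `ab`. Seen from `a` they all lie in an open half-turn, where
"`y` is counterclockwise from `x`" (`0 < det3 a x y`) is transitive, so general position sorts them
by angle. For two points `p, q` in this order the paths `q a b p` and `q p a b` work. For three
points `p, q, r` there are two explicit pairs of paths, according to the side of the line `pr` on
which `q` lies. Each non-crossing condition between two edges is witnessed by a line through one
of them that has the other strictly on one side.
-/

lemma det3_swap_left (a b p : Pt) : det3 b a p = -det3 a b p := by unfold det3; ring

lemma det3_swap_right (a b p : Pt) : det3 a p b = -det3 a b p := by unfold det3; ring

lemma det3_rotate (a b p : Pt) : det3 b p a = det3 a b p := by unfold det3; ring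

lemma det3_rotate' (a b p : Pt) : det3 p a b = det3 a b p := by unfold det3; ring

@[simp] lemma det3_self_left (a b : Pt) : det3 a b a = 0 := by unfold det3; ring

@[simp] lemma det3_self_right (a b : Pt) : det3 a b b = 0 := by unfold det3; ring

@[simp] lemma det3_self (a p : Pt) : det3 a a p = 0 := by unfold det3; ring

lemma ne_of_det3_pos {a p q : Pt} (h : 0 < det3 a p q) : p ≠ q := by
  rintro rfl
  simp at h

lemma det3_pos_or_det3_pos {a p q : Pt} (h : det3 a p q ≠ 0) :
    0 < det3 a p q ∨ 0 < det3 a q p := by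
  rw [det3_swap_right a p q, neg_pos]
  exact h.lt_or_gt.symm

lemma det3_add_smul {a b x y : Pt} {s t : ℝ} (hst : s + t = 1) :
    det3 a b (s • x + t • y) = s * det3 a b x + t * det3 a b y := by
  obtain rfl : t = 1 - s := by linarith
  simp only [det3, Prod.fst_add, Prod.snd_add, Prod.smul_fst, Prod.smul_snd, smul_eq_mul]
  ring

lemma det3_pos_trans {a b x y z : Pt} (hx : 0 < det3 a b x) (hy : 0 < det3 a b y)
    (hz : 0 < det3 a b z) (hxy : 0 < det3 a x y) (hyz : 0 < det3 a y z) : 0 < det3 a x z := by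
  -- a Grassmann–Plücker relation
  have key : det3 a x z * det3 a b y = det3 a x y * det3 a b z + det3 a y z * det3 a b x := by
    unfold det3; ring
  nlinarith [mul_pos hxy hz, mul_pos hyz hx]

lemma det3_eq_zero_of_mem_segment {a b w : Pt} (hw : w ∈ segment ℝ a b) : det3 a b w = 0 := by
  obtain ⟨s, t, -, -, hst, rfl⟩ := hw
  simp [det3_add_smul hst]

lemma det3_pos_of_mem_segment {a b x y w : Pt} (hx : 0 < det3 a b x) (hy : 0 < det3 a b y)
    (hw : w ∈ segment ℝ x y) : 0 < det3 a b w := by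
  obtain ⟨s, t, hs, ht, hst, rfl⟩ := hw
  rw [det3_add_smul hst]
  rcases hs.eq_or_lt with rfl | hs
  · simp_all
  · positivity

lemma disjoint_segment_of_det3_pos {a b x y : Pt} (hx : 0 < det3 a b x) (hy : 0 < det3 a b y) :
    Disjoint (segment ℝ a b) (segment ℝ x y) :=
  Set.disjoint_left.2 fun _ hab hxy =>
    (det3_pos_of_mem_segment hx hy hxy).ne' (det3_eq_zero_of_mem_segment hab)

lemma collinear_of_det3_eq_zero {p q r : Pt} (h : det3 p q r = 0) :
    Collinear ℝ ({p, q, r} : Set Pt) := by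
  rcases eq_or_ne p q with rfl | hpq
  · simpa using collinear_pair ℝ p r
  have hnorm : 0 < (q.1 - p.1) ^ 2 + (q.2 - p.2) ^ 2 := by
    by_contra! hle
    exact hpq (Prod.ext (by nlinarith) (by nlinarith))
  set t := ((q.1 - p.1) * (r.1 - p.1) + (q.2 - p.2) * (r.2 - p.2)) /
    ((q.1 - p.1) ^ 2 + (q.2 - p.2) ^ 2)
  have hr : AffineMap.lineMap p q t = r := by
    unfold det3 at h
    ext <;> simp only [AffineMap.lineMap_apply, vsub_eq_sub, vadd_eq_add, Prod.fst_add,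
      Prod.snd_add, Prod.smul_fst, Prod.smul_snd, Prod.fst_sub, Prod.snd_sub, smul_eq_mul, t] <;>
      field_simp
    · linear_combination (q.2 - p.2) * h
    · linear_combination -(q.1 - p.1) * h
  have := collinear_insert_of_mem_affineSpan_pair (hr ▸ AffineMap.lineMap_mem_affineSpan_pair t p q)
  rwa [Set.insert_comm, Set.pair_comm] at this

lemma GenPos.det3_ne_zero {S : Finset Pt} (hgp : GenPos S) {p q r : Pt} (hp : p ∈ S) (hq : q ∈ S)
    (hr : r ∈ S) (hpq : p ≠ q) (hpr : p ≠ r) (hqr : q ≠ r) : det3 p q r ≠ 0 :=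
  fun h => hgp p hp q hq r hr hpq hpr hqr (collinear_of_det3_eq_zero h)

def MeetAtEndpoints (e f : Pt × Pt) : Prop :=
  segment ℝ e.1 e.2 ∩ segment ℝ f.1 f.2 ⊆ ({e.1, e.2} : Set Pt) ∩ ({f.1, f.2} : Set Pt)

instance : Std.Symm MeetAtEndpoints where
  symm _ _ h := by simpa only [MeetAtEndpoints, Set.inter_comm] using h

lemma meetAtEndpoints_of_disjoint {x y z w : Pt} (h : Disjoint (segment ℝ x y) (segment ℝ z w)) :
    MeetAtEndpoints (x, y) (z, w) := by
  simp [MeetAtEndpoints, h.inter_eq]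

lemma meetAtEndpoints_of_det3_ne_zero {x y z : Pt} (h : det3 x y z ≠ 0) :
    MeetAtEndpoints (x, y) (y, z) := by
  rintro w ⟨hxy, s, t, -, -, hst, rfl⟩
  have ht : t = 0 := by
    have := det3_eq_zero_of_mem_segment hxy
    rw [det3_add_smul hst] at this
    simpa [h] using this
  obtain rfl : s = 1 := by linarith
  simp [ht]

lemma planePath_of_pairwise {S : Finset Pt} {l : List Pt} (hnd : l.Nodup) (hS : l.toFinset = S)
    (h : (edgeList l).Pairwise MeetAtEndpoints) : PlanePath S l :=
  ⟨hnd, hS, fun _ he _ hf hef => h.forall he hf hef⟩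

lemma List.nodup_of_card_toFinset {α : Type*} [DecidableEq α] {l : List α}
    (h : l.toFinset.card = l.length) : l.Nodup :=
  Multiset.toFinset_card_eq_card_iff_nodup.1 h

lemma planePath_four {S : Finset Pt} (hgp : GenPos S) (hcard : S.card = 4) {v₁ v₂ v₃ v₄ : Pt}
    (hS : [v₁, v₂, v₃, v₄].toFinset = S)
    (h₁₃ : Disjoint (segment ℝ v₁ v₂) (segment ℝ v₃ v₄)) :
    PlanePath S [v₁, v₂, v₃, v₄] := by
  have hnd : [v₁, v₂, v₃, v₄].Nodup := List.nodup_of_card_toFinset (by rw [hS, hcard]; rfl)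
  have hmem : ∀ v ∈ [v₁, v₂, v₃, v₄], v ∈ S := fun v hv => hS ▸ List.mem_toFinset.2 hv
  refine planePath_of_pairwise hnd hS ?_
  simp only [List.nodup_cons, List.nodup_nil, List.mem_cons, List.not_mem_nil, or_false, not_or,
    not_false_eq_true, and_true] at hnd
  obtain ⟨⟨n₁₂, n₁₃, -⟩, ⟨n₂₃, n₂₄⟩, n₃₄⟩ := hnd
  simp only [List.mem_cons, List.not_mem_nil, or_false, forall_eq_or_imp, forall_eq] at hmem
  obtain ⟨m₁, m₂, m₃, m₄⟩ := hmem
  simp only [edgeList, List.tail_cons, List.zip_cons_cons, List.zip_nil_right, List.pairwise_cons,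
    List.mem_cons, List.not_mem_nil, or_false, forall_eq_or_imp, forall_eq, List.Pairwise.nil,
    and_true, IsEmpty.forall_iff, implies_true]
  exact ⟨⟨meetAtEndpoints_of_det3_ne_zero (hgp.det3_ne_zero m₁ m₂ m₃ n₁₂ n₁₃ n₂₃),
      meetAtEndpoints_of_disjoint h₁₃⟩,
    meetAtEndpoints_of_det3_ne_zero (hgp.det3_ne_zero m₂ m₃ m₄ n₂₃ n₂₄ n₃₄)⟩

lemma planePath_five {S : Finset Pt} (hgp : GenPos S) (hcard : S.card = 5) {v₁ v₂ v₃ v₄ v₅ : Pt}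
    (hS : [v₁, v₂, v₃, v₄, v₅].toFinset = S)
    (h₁₃ : Disjoint (segment ℝ v₁ v₂) (segment ℝ v₃ v₄))
    (h₁₄ : Disjoint (segment ℝ v₁ v₂) (segment ℝ v₄ v₅))
    (h₂₄ : Disjoint (segment ℝ v₂ v₃) (segment ℝ v₄ v₅)) :
    PlanePath S [v₁, v₂, v₃, v₄, v₅] := by
  have hnd : [v₁, v₂, v₃, v₄, v₅].Nodup := List.nodup_of_card_toFinset (by rw [hS, hcard]; rfl)
  have hmem : ∀ v ∈ [v₁, v₂, v₃, v₄, v₅], v ∈ S := fun v hv => hS ▸ List.mem_toFinset.2 hv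
  refine planePath_of_pairwise hnd hS ?_
  simp only [List.nodup_cons, List.nodup_nil, List.mem_cons, List.not_mem_nil, or_false, not_or,
    not_false_eq_true, and_true] at hnd
  obtain ⟨⟨n₁₂, n₁₃, -, -⟩, ⟨n₂₃, n₂₄, -⟩, ⟨n₃₄, n₃₅⟩, n₄₅⟩ := hnd
  simp only [List.mem_cons, List.not_mem_nil, or_false, forall_eq_or_imp, forall_eq] at hmem
  obtain ⟨m₁, m₂, m₃, m₄, m₅⟩ := hmem
  simp only [edgeList, List.tail_cons, List.zip_cons_cons, List.zip_nil_right, List.pairwise_cons,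
    List.mem_cons, List.not_mem_nil, or_false, forall_eq_or_imp, forall_eq, List.Pairwise.nil,
    and_true, IsEmpty.forall_iff, implies_true]
  exact ⟨⟨meetAtEndpoints_of_det3_ne_zero (hgp.det3_ne_zero m₁ m₂ m₃ n₁₂ n₁₃ n₂₃),
      meetAtEndpoints_of_disjoint h₁₃, meetAtEndpoints_of_disjoint h₁₄⟩,
    ⟨meetAtEndpoints_of_det3_ne_zero (hgp.det3_ne_zero m₂ m₃ m₄ n₂₃ n₂₄ n₃₄),
      meetAtEndpoints_of_disjoint h₂₄⟩,
    meetAtEndpoints_of_det3_ne_zero (hgp.det3_ne_zero m₃ m₄ m₅ n₃₄ n₃₅ n₄₅)⟩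

/-- The points of `l` are sorted by angle around `a`, all within an open half-turn. -/
def IsCCWAround (a : Pt) (l : List Pt) : Prop := l.Pairwise fun x y => 0 < det3 a x y

lemma IsCCWAround.nodup {a : Pt} {l : List Pt} (h : IsCCWAround a l) : l.Nodup :=
  h.imp ne_of_det3_pos

lemma IsCCWAround.nodup_cons_cons {a b p : Pt} {l : List Pt} (h : IsCCWAround a (b :: p :: l)) :
    (a :: b :: p :: l).Nodup := by
  refine List.nodup_cons.2 ⟨fun ha => ?_, h.nodup⟩
  obtain ⟨hb, -⟩ := List.pairwise_cons.1 h
  rcases List.mem_cons.1 ha with rfl | ha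
  · simpa using hb p (by simp)
  · simpa using hb a ha

lemma isCCWAround_of_chain {a b x y z : Pt} (hx : 0 < det3 a b x) (hy : 0 < det3 a b y)
    (hz : 0 < det3 a b z) (hxy : 0 < det3 a x y) (hyz : 0 < det3 a y z) :
    IsCCWAround a [b, x, y, z] := by
  simp [IsCCWAround, *, det3_pos_trans hx hy hz hxy hyz]

lemma exists_isCCWAround_two {a b c d : Pt} (hc : 0 < det3 a b c) (hd : 0 < det3 a b d)
    (hcd : det3 a c d ≠ 0) : ∃ p q, ({p, q} : Finset Pt) = {c, d} ∧ IsCCWAround a [b, p, q] := by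
  rcases det3_pos_or_det3_pos hcd with h | h
  · exact ⟨c, d, rfl, by simp [IsCCWAround, *]⟩
  · exact ⟨d, c, Finset.pair_comm d c, by simp [IsCCWAround, *]⟩

lemma exists_isCCWAround_three {a b c d e : Pt} (hc : 0 < det3 a b c) (hd : 0 < det3 a b d)
    (he : 0 < det3 a b e) (hcd : det3 a c d ≠ 0) (hce : det3 a c e ≠ 0) (hde : det3 a d e ≠ 0) :
    ∃ p q r, ({p, q, r} : Finset Pt) = {c, d, e} ∧ IsCCWAround a [b, p, q, r] := by
  rcases det3_pos_or_det3_pos hcd with _ | _ <;> rcases det3_pos_or_det3_pos hce with _ | _ <;>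
    rcases det3_pos_or_det3_pos hde with _ | _
  all_goals first
    | exact ⟨c, d, e, rfl, isCCWAround_of_chain hc hd he ‹_› ‹_›⟩
    | exact ⟨c, e, d, by ext; simp; tauto, isCCWAround_of_chain hc he hd ‹_› ‹_›⟩
    | exact ⟨d, c, e, by ext; simp; tauto, isCCWAround_of_chain hd hc he ‹_› ‹_›⟩
    | exact ⟨d, e, c, by ext; simp; tauto, isCCWAround_of_chain hd he hc ‹_› ‹_›⟩
    | exact ⟨e, c, d, by ext; simp; tauto, isCCWAround_of_chain he hc hd ‹_› ‹_›⟩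
    | exact ⟨e, d, c, by ext; simp; tauto, isCCWAround_of_chain he hd hc ‹_› ‹_›⟩

def HasPathPairSharing (S : Finset Pt) (a b : Pt) : Prop :=
  ∃ l₁ l₂ : List Pt, PlanePath S l₁ ∧ PlanePath S l₂ ∧ SharesExactly a b l₁ l₂

lemma hasPathPairSharing_four {a b p q : Pt} (hgp : GenPos {a, b, p, q})
    (hccw : IsCCWAround a [b, p, q]) : HasPathPairSharing {a, b, p, q} a b := by
  have hnd := hccw.nodup_cons_cons
  have hcard : ({a, b, p, q} : Finset Pt).card = 4 := by
    simpa using List.toFinset_card_of_nodup hnd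
  simp only [IsCCWAround, List.pairwise_cons, List.mem_cons, List.not_mem_nil, or_false,
    forall_eq_or_imp, forall_eq] at hccw
  obtain ⟨⟨hp, hq⟩, hpq, -⟩ := hccw
  refine ⟨[q, a, b, p], [q, p, a, b], planePath_four hgp hcard (by ext; simp; tauto) ?_,
    planePath_four hgp hcard (by ext; simp; tauto) ?_, ?_⟩
  · exact disjoint_segment_of_det3_pos (by rwa [det3_rotate']) (by rwa [det3_rotate'])
  · exact (disjoint_segment_of_det3_pos hq hp).symm
  · simp only [List.nodup_cons, List.mem_cons, List.not_mem_nil, or_false, not_or,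
      not_false_eq_true, List.nodup_nil, and_self, and_true, SharesExactly, IsEdgeOf, edgeList,
      List.tail_cons, List.zip_cons_cons, List.zip_nil_right, Prod.mk.injEq, or_true, true_or,
      true_and, pair_eq_pair_iff, Prod.forall] at hnd ⊢
    grind

section FivePoints

variable {a b p q r : Pt}

lemma hasPathPairSharing_five_of_det3_pos (hgp : GenPos {a, b, p, q, r})
    (hcard : ({a, b, p, q, r} : Finset Pt).card = 5) (hp : 0 < det3 a b p) (hq : 0 < det3 a b q)
    (hr : 0 < det3 a b r) (hpq : 0 < det3 a p q) (hpr : 0 < det3 a p r) (hprq : 0 < det3 p r q) :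
    HasPathPairSharing {a, b, p, q, r} a b := by
  refine ⟨[r, q, p, a, b], [q, a, b, p, r],
    planePath_five hgp hcard (by ext; simp; tauto) ?_ ?_ ?_,
    planePath_five hgp hcard (by ext; simp; tauto) ?_ ?_ ?_, ?_⟩
  · rw [segment_symm ℝ p a]; exact (disjoint_segment_of_det3_pos hpr hpq).symm
  · exact (disjoint_segment_of_det3_pos hr hq).symm
  · exact (disjoint_segment_of_det3_pos hq hp).symm
  · exact disjoint_segment_of_det3_pos (by rwa [det3_rotate']) (by rwa [det3_rotate'])
  · exact (disjoint_segment_of_det3_pos hprq (by rwa [det3_rotate])).symm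
  · exact disjoint_segment_of_det3_pos hp hr
  · have hnd : [a, b, p, q, r].Nodup := List.nodup_of_card_toFinset (by simpa using hcard)
    simp only [List.nodup_cons, List.mem_cons, List.not_mem_nil, or_false, not_or,
      not_false_eq_true, List.nodup_nil, and_self, and_true, SharesExactly, IsEdgeOf, edgeList,
      List.tail_cons, List.zip_cons_cons, List.zip_nil_right, Prod.mk.injEq, or_true, true_or,
      true_and, pair_eq_pair_iff, Prod.forall] at hnd ⊢
    grind

lemma hasPathPairSharing_five_of_det3_neg (hgp : GenPos {a, b, p, q, r})
    (hcard : ({a, b, p, q, r} : Finset Pt).card = 5) (hp : 0 < det3 a b p) (hq : 0 < det3 a b q)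
    (hr : 0 < det3 a b r) (hpr : 0 < det3 a p r) (hqr : 0 < det3 a q r) (hrpq : 0 < det3 r p q) :
    HasPathPairSharing {a, b, p, q, r} a b := by
  refine ⟨[q, r, p, a, b], [r, a, b, q, p],
    planePath_five hgp hcard (by ext; simp; tauto) ?_ ?_ ?_,
    planePath_five hgp hcard (by ext; simp; tauto) ?_ ?_ ?_, ?_⟩
  · exact disjoint_segment_of_det3_pos (by rwa [det3_rotate']) (by rwa [det3_rotate])
  · exact (disjoint_segment_of_det3_pos hq hr).symm
  · exact (disjoint_segment_of_det3_pos hr hp).symm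
  · exact disjoint_segment_of_det3_pos (by rwa [det3_rotate']) (by rwa [det3_rotate'])
  · exact disjoint_segment_of_det3_pos (by rwa [det3_rotate']) (by rwa [det3_rotate'])
  · exact disjoint_segment_of_det3_pos hq hp
  · have hnd : [a, b, p, q, r].Nodup := List.nodup_of_card_toFinset (by simpa using hcard)
    simp only [List.nodup_cons, List.mem_cons, List.not_mem_nil, or_false, not_or,
      not_false_eq_true, List.nodup_nil, and_self, and_true, SharesExactly, IsEdgeOf, edgeList,
      List.tail_cons, List.zip_cons_cons, List.zip_nil_right, Prod.mk.injEq, or_true, true_or,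
      true_and, pair_eq_pair_iff, Prod.forall] at hnd ⊢
    grind

lemma hasPathPairSharing_five (hgp : GenPos {a, b, p, q, r}) (hccw : IsCCWAround a [b, p, q, r]) :
    HasPathPairSharing {a, b, p, q, r} a b := by
  have hcard : ({a, b, p, q, r} : Finset Pt).card = 5 := by
    simpa using List.toFinset_card_of_nodup hccw.nodup_cons_cons
  simp only [IsCCWAround, List.pairwise_cons, List.mem_cons, List.not_mem_nil, or_false,
    forall_eq_or_imp, forall_eq] at hccw
  obtain ⟨⟨hp, hq, hr⟩, ⟨hpq, hpr⟩, hqr, -⟩ := hccw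
  have hprq : det3 p r q ≠ 0 := hgp.det3_ne_zero (by simp) (by simp) (by simp)
    (ne_of_det3_pos hpr) (ne_of_det3_pos hpq) (ne_of_det3_pos hqr).symm
  rcases hprq.lt_or_gt with hneg | hpos
  · refine hasPathPairSharing_five_of_det3_neg hgp hcard hp hq hr hpr hqr ?_
    rw [det3_swap_left]
    linarith
  · exact hasPathPairSharing_five_of_det3_pos hgp hcard hp hq hr hpq hpr hpos

end FivePoints

lemma eq_insert_insert_filter_det3_pos {S : Finset Pt} {a b : Pt} (ha : a ∈ S) (hb : b ∈ S)
    (hleft : ∀ p ∈ S, p ≠ a → p ≠ b → 0 < det3 a b p) :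
    S = insert a (insert b (S.filter fun p => 0 < det3 a b p)) := by
  ext p
  by_cases hpa : p = a
  · simp [hpa, ha]
  by_cases hpb : p = b
  · simp [hpb, hb]
  simpa [hpa, hpb] using fun hp => hleft p hp hpa hpb

lemma filter_det3_neg_eq_empty {S : Finset Pt} {a b : Pt}
    (hleft : ∀ p ∈ S, p ≠ a → p ≠ b → 0 < det3 a b p) :
    S.filter (fun p => det3 a b p < 0) = ∅ := by
  refine Finset.filter_eq_empty_iff.2 fun p hp => ?_
  by_cases hpa : p = a
  · simp [hpa]
  by_cases hpb : p = b
  · simp [hpb]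
  exact not_lt.2 (hleft p hp hpa hpb).le

lemma hasPathPairSharing_of_left {S : Finset Pt} (hgp : GenPos S) {a b : Pt} (ha : a ∈ S)
    (hb : b ∈ S) (hleft : ∀ p ∈ S, p ≠ a → p ≠ b → 0 < det3 a b p)
    (hcard : (S.filter fun p => 0 < det3 a b p).card = 2 ∨
      (S.filter fun p => 0 < det3 a b p).card = 3) :
    HasPathPairSharing S a b := by
  have hS := eq_insert_insert_filter_det3_pos ha hb hleft
  have hT : ∀ p ∈ S.filter fun p => 0 < det3 a b p, p ∈ S ∧ 0 < det3 a b p :=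
    fun p => Finset.mem_filter.1
  have hdet : ∀ p ∈ S.filter (fun p => 0 < det3 a b p), ∀ q ∈ S.filter (fun p => 0 < det3 a b p),
      p ≠ q → det3 a p q ≠ 0 := by
    intro p hp q hq hpq
    refine hgp.det3_ne_zero ha (hT p hp).1 (hT q hq).1 ?_ ?_ hpq
    · rintro rfl; simpa using (hT a hp).2
    · rintro rfl; simpa using (hT a hq).2
  rcases hcard with h2 | h3
  · obtain ⟨c, d, hcd, hT₂⟩ := Finset.card_eq_two.1 h2
    rw [hT₂] at hS hT hdet
    obtain ⟨p, q, hpq, hccw⟩ := exists_isCCWAround_two (hT c (by simp)).2 (hT d (by simp)).2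
      (hdet c (by simp) d (by simp) hcd)
    rw [← hpq] at hS
    subst hS
    exact hasPathPairSharing_four hgp hccw
  · obtain ⟨c, d, e, hcd, hce, hde, hT₃⟩ := Finset.card_eq_three.1 h3
    rw [hT₃] at hS hT hdet
    obtain ⟨p, q, r, hpqr, hccw⟩ := exists_isCCWAround_three (hT c (by simp)).2
      (hT d (by simp)).2 (hT e (by simp)).2 (hdet c (by simp) d (by simp) hcd)
      (hdet c (by simp) e (by simp) hce) (hdet d (by simp) e (by simp) hde)
    rw [← hpqr] at hS
    subst hS
    exact hasPathPairSharing_five hgp hccw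

lemma SharesExactly.symm {a b : Pt} {l₁ l₂ : List Pt} (h : SharesExactly a b l₁ l₂) :
    SharesExactly b a l₁ l₂ := by
  obtain ⟨h₁, h₂, h⟩ := h
  exact ⟨Or.symm h₁, Or.symm h₂, fun x y hx hy => (h x y hx hy).trans (Set.pair_comm a b)⟩

theorem stmt_12_general (S : Finset Pt) (hgp : GenPos S)
    (a b : Pt)
    (hedge : IsHullEdge S a b)
    (hcount :
      ((S.filter (fun p => det3 a b p < 0)).card = 0 ∧
        ((S.filter (fun p => 0 < det3 a b p)).card = 2 ∨
         (S.filter (fun p => 0 < det3 a b p)).card = 3)) ∨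
      ((S.filter (fun p => 0 < det3 a b p)).card = 0 ∧
        ((S.filter (fun p => det3 a b p < 0)).card = 2 ∨
         (S.filter (fun p => det3 a b p < 0)).card = 3))) :
    ∃ l₁ l₂ : List Pt, PlanePath S l₁ ∧ PlanePath S l₂ ∧ SharesExactly a b l₁ l₂ := by
  obtain ⟨ha, hb, -, hleft | hright⟩ := hedge
  · exact hasPathPairSharing_of_left hgp ha hb hleft
      (by simpa [filter_det3_neg_eq_empty hleft] using hcount)
  · have hleft : ∀ p ∈ S, p ≠ b → p ≠ a → 0 < det3 b a p := fun p hp hpb hpa => by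
      rw [det3_swap_left]
      linarith [hright p hp hpa hpb]
    have hempty := filter_det3_neg_eq_empty hleft
    simp only [det3_swap_left a b, Left.neg_neg_iff] at hempty
    obtain ⟨l₁, l₂, h₁, h₂, h⟩ := hasPathPairSharing_of_left hgp hb ha hleft
      (by simpa [hempty, det3_swap_left a b] using hcount)
    exact ⟨l₁, l₂, h₁, h₂, h.symm⟩

/-- If `a, b` are consecutive hull vertices (all other points strictly on
one side of `ℓ(ab)`) and the open halfplane containing the other points contains exactly
2 or exactly 3 points of `S`, then there are two plane Hamiltonian paths on `S` whose
common edge set is exactly the segment `ab`. -/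
theorem stmt_12 (S : Finset Pt) (hgp : GenPos S)
    (a b : Pt) (ha : a ∈ S) (hb : b ∈ S) (hab : a ≠ b)
    (hedge : IsHullEdge S a b)
    (hcount :
      ((S.filter (fun p => det3 a b p < 0)).card = 0 ∧
        ((S.filter (fun p => 0 < det3 a b p)).card = 2 ∨
         (S.filter (fun p => 0 < det3 a b p)).card = 3)) ∨
      ((S.filter (fun p => 0 < det3 a b p)).card = 0 ∧
        ((S.filter (fun p => det3 a b p < 0)).card = 2 ∨
         (S.filter (fun p => det3 a b p < 0)).card = 3))) :
    ∃ l₁ l₂ : List Pt, PlanePath S l₁ ∧ PlanePath S l₂ ∧ SharesExactly a b l₁ l₂ :=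
  stmt_12_general S hgp a b hedge hcount
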